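/- arXiv:1710.06416 — 2 statements merged into one kernel-verified Lean document; each statement's English description precedes it below -/
import Mathlib

section
/- Let n : ℕ, let sd(n) be the poset of nonempty finite subsets of Fin (n+1) ordered by inclusion, regarded as a category, and let W be the class of inclusions S ⊆ T with T = S ∪ {max T}. Then for every category E, precomposition with the functor min : sd(n) ⥤ (Fin (n+1))ᵒᵖ induces an equivalence of categories from the functor category Fun((Fin (n+1))ᵒᵖ, E) onto the full subcategory of Fun(sd(n), E) spanned by those functors that send every morphism of W to an isomorphism. -/
/-!
`min : sd(n) ⥤ [n]ᵒᵖ` is left adjoint to the fully faithful functor `k ↦ [k, n]`, so it is the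
localization of `sd(n)` at the morphisms it inverts, namely the inclusions `S ⊆ T` with
`min S = min T`. A functor inverting `W` inverts all of these: `{min T} ⊆ T` is a composite of
morphisms of `W` (add the elements of `T` in increasing order), and 2-out-of-3 applies to
`{min S} ⊆ S ⊆ T`.
-/

open CategoryTheory

/-- The subdivision `sd([n])`: the poset of nonempty finite subsets of `Fin (n+1)`,
ordered by inclusion, regarded as a category. -/
abbrev Sd (n : ℕ) := {S : Finset (Fin (n + 1)) // S.Nonempty}

/-- The functor `min : sd([n]) ⥤ [n]ᵒᵖ` sending a nonempty subset to its minimum. -/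
def sdMin (n : ℕ) : Sd n ⥤ (Fin (n + 1))ᵒᵖ where
  obj S := Opposite.op (S.1.min' S.2)
  map {S T} f := (homOfLE (Finset.min'_le T.1 (S.1.min' S.2)
      (by exact leOfHom f (S.1.min'_mem S.2)))).op
  map_id _ := rfl
  map_comp _ _ := rfl

/-- The class of morphisms `S ⊆ T` of `sd([n])` with `T = S ∪ {max T}`. -/
def sdW (n : ℕ) : MorphismProperty (Sd n) :=
  fun S T _ => T.1 = insert (T.1.max' T.2) S.1

namespace CategoryTheory.Localization

lemma exists_functorEquivalence_of_isInvertedBy_iff {C D : Type*} [Category C] [Category D]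
    (L : C ⥤ D) (W W' : MorphismProperty C) [L.IsLocalization W] (E : Type*) [Category E]
    (h : ∀ F : C ⥤ E, W'.IsInvertedBy F ↔ W.IsInvertedBy F) :
    ∃ e : (D ⥤ E) ≌ ObjectProperty.FullSubcategory (fun F : C ⥤ E => W'.IsInvertedBy F),
      e.functor ⋙ ObjectProperty.ι _ = (Functor.whiskeringLeft C D E).obj L := by
  rw [show (fun F : C ⥤ E => W'.IsInvertedBy F) = fun F => W.IsInvertedBy F from
    funext fun F => propext (h F)]
  exact ⟨functorEquivalence L W E, rfl⟩

end CategoryTheory.Localization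

lemma Finset.min'_Ici {α : Type*} [LinearOrder α] [LocallyFiniteOrderTop α] (a : α) :
    (Finset.Ici a).min' Finset.nonempty_Ici = a :=
  le_antisymm (Finset.min'_le _ _ (Finset.mem_Ici.2 le_rfl))
    (Finset.le_min' _ _ _ fun _ => Finset.mem_Ici.1)

def sdIci (n : ℕ) : (Fin (n + 1))ᵒᵖ ⥤ Sd n where
  obj k := ⟨Finset.Ici k.unop, Finset.nonempty_Ici⟩
  map f := homOfLE (Finset.Ici_subset_Ici.2 (leOfHom f.unop))

instance (n : ℕ) : (sdIci n).Full where
  map_surjective f := ⟨(homOfLE (Finset.Ici_subset_Ici.1 (leOfHom f))).op, Subsingleton.elim _ _⟩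

instance (n : ℕ) : (sdIci n).Faithful where
  map_injective _ := Subsingleton.elim _ _

def sdMinAdjunction (n : ℕ) : sdMin n ⊣ sdIci n :=
  Adjunction.mkOfUnitCounit
    { unit := { app S := homOfLE fun x hx => Finset.mem_Ici.2 (S.1.min'_le x hx) }
      counit := { app k := (homOfLE (Finset.min'_Ici k.unop).ge).op } }

lemma isIso_sdMin_map_iff {n : ℕ} {S T : Sd n} (f : S ⟶ T) :
    IsIso ((sdMin n).map f) ↔ S.1.min' S.2 = T.1.min' T.2 := by
  rw [sdMin, isIso_op_iff, PartialOrder.isIso_iff_eq, eq_comm]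

lemma min'_eq_of_sdW {n : ℕ} {S T : Sd n} {f : S ⟶ T} (hf : sdW n f) :
    S.1.min' S.2 = T.1.min' T.2 := by
  have hST : S.1 ⊆ T.1 := leOfHom f
  refine le_antisymm ?_ (T.1.min'_le _ (hST (S.1.min'_mem S.2)))
  have hmin : T.1.min' T.2 ∈ insert (T.1.max' T.2) S.1 := hf ▸ T.1.min'_mem T.2
  rcases Finset.mem_insert.1 hmin with hmax | hmem
  · rw [hmax]
    exact T.1.le_max' _ (hST (S.1.min'_mem S.2))
  · exact S.1.min'_le _ hmem

section

variable {n : ℕ} {E : Type*} [Category E]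

lemma isIso_map_of_source_eq_singleton_min' {F : Sd n ⥤ E} (hF : (sdW n).IsInvertedBy F)
    {S T : Sd n} (f : S ⟶ T) (hS : S.1 = {T.1.min' T.2}) : IsIso (F.map f) := by
  obtain ⟨t, ht⟩ := T
  induction t using Finset.induction_on_max generalizing S with
  | empty => exact absurd ht Finset.not_nonempty_empty
  | insert a s hlt ih =>
    change S.1 = {(insert a s).min' ht} at hS
    rcases s.eq_empty_or_nonempty with rfl | hs
    · have : IsIso f := (PartialOrder.isIso_iff_eq f).2 (Subtype.ext (by simpa using hS))
      infer_instance
    · have hmin : (insert a s).min' ht = s.min' hs := by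
        rw [Finset.min'_insert a s hs, min_eq_right (hlt _ (s.min'_mem hs)).le]
      let g : S ⟶ ⟨s, hs⟩ := homOfLE (by
        change S.1 ⊆ s
        rw [hS, hmin]
        exact Finset.singleton_subset_iff.2 (s.min'_mem hs))
      let h : (⟨s, hs⟩ : Sd n) ⟶ ⟨insert a s, ht⟩ := homOfLE (Finset.subset_insert a s)
      have hh : sdW n h := by
        change insert a s = insert ((insert a s).max' ht) s
        rw [Finset.max'_insert a s hs, max_eq_left (hlt _ (s.max'_mem hs)).le]
      have := ih hs g (hS.trans (congrArg _ hmin))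
      have := hF h hh
      rw [Subsingleton.elim f (g ≫ h), F.map_comp]
      infer_instance

lemma isIso_map_of_min'_eq {F : Sd n ⥤ E} (hF : (sdW n).IsInvertedBy F) {S T : Sd n}
    (f : S ⟶ T) (h : S.1.min' S.2 = T.1.min' T.2) : IsIso (F.map f) := by
  let m : Sd n := ⟨{S.1.min' S.2}, Finset.singleton_nonempty _⟩
  let g : m ⟶ S := homOfLE (Finset.singleton_subset_iff.2 (S.1.min'_mem S.2))
  have := isIso_map_of_source_eq_singleton_min' hF g rfl
  have := isIso_map_of_source_eq_singleton_min' hF (g ≫ f) (congrArg singleton h)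
  rw [F.map_comp] at this
  exact IsIso.of_isIso_comp_left (F.map g) (F.map f)

lemma isInvertedBy_sdW_iff (F : Sd n ⥤ E) :
    (sdW n).IsInvertedBy F ↔
      ((MorphismProperty.isomorphisms _).inverseImage (sdMin n)).IsInvertedBy F :=
  ⟨fun hF _ _ f hf => isIso_map_of_min'_eq hF f ((isIso_sdMin_map_iff f).1 hf),
    fun hF _ _ f hf => hF f ((isIso_sdMin_map_iff f).2 (min'_eq_of_sdW hf))⟩

end

/-- Precomposition with `min : sd([n]) ⥤ [n]ᵒᵖ` induces an equivalence of categories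
from `Fun([n]ᵒᵖ, E)` onto the full subcategory of `Fun(sd([n]), E)` spanned by the
functors sending every morphism of `W` to an isomorphism. -/
theorem precomposition_sdMin_equivalence (n : ℕ) (E : Type*) [Category E] :
    ∃ (e : ((Fin (n + 1))ᵒᵖ ⥤ E) ≌
        ObjectProperty.FullSubcategory (fun F : Sd n ⥤ E => (sdW n).IsInvertedBy F)),
      e.functor ⋙ ObjectProperty.ι _ =
        (Functor.whiskeringLeft (Sd n) ((Fin (n + 1))ᵒᵖ) E).obj (sdMin n) := by
  have := (sdMinAdjunction n).isLocalization
  exact Localization.exists_functorEquivalence_of_isInvertedBy_iff _ _ _ E isInvertedBy_sdW_iff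
end

section
/- The assignment sending n : ℕ+ to the subgroup μ_n := {z ∈ Circle | z ^ (n : ℕ) = 1} of n-th roots of unity, and sending ⊤ to the full group, defines an order isomorphism from WithTop ℕ+ — where ℕ+ is partially ordered by divisibility and ⊤ is a top element — onto the poset of closed subgroups of the circle group Circle, ordered by inclusion. In particular: every proper closed subgroup of Circle equals μ_n for a unique n ≥ 1, and μ_m ≤ μ_n if and only if m divides n. -/
/-- The positive natural numbers, partially ordered by divisibility. -/
def PNatDiv : Type := ℕ+

instance : PartialOrder PNatDiv where
  le a b := (show ℕ+ from a) ∣ (show ℕ+ from b)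
  le_refl a := dvd_refl _
  le_trans a b c hab hbc := dvd_trans hab hbc
  le_antisymm a b hab hba := PNat.dvd_antisymm hab hba

/-- The subgroup `μ_n` of `n`-th roots of unity in the circle group. -/
noncomputable def rootsOfUnitySubgroup (n : ℕ+) : Subgroup Circle where
  carrier := {z | z ^ (n : ℕ) = 1}
  one_mem' := one_pow _
  mul_mem' := by
    intro a b ha hb
    simp only [Set.mem_setOf_eq] at *
    rw [mul_pow, ha, hb, one_mul]
  inv_mem' := by
    intro a ha
    simp only [Set.mem_setOf_eq] at *
    rw [inv_pow, ha, inv_one]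

/-- The poset of closed subgroups of the circle group, ordered by inclusion. -/
abbrev ClosedSubgroupCircle := {H : Subgroup Circle // IsClosed (H : Set Circle)}

/-!
Pulling back along the surjective homomorphism `Circle.exp : ℝ → Circle` embeds the subgroups of
the circle into the additive subgroups of `ℝ`, and closed subgroups go to closed ones. A closed
subgroup of `ℝ` is either everything or cyclic; since the preimage always contains `2π`, in the
cyclic case it is generated by `2π / n` for some `n ≥ 1`, which is exactly the preimage of `μ_n`.
-/

open Real

lemma rootsOfUnitySubgroup_isClosed (n : ℕ+) :
    IsClosed (rootsOfUnitySubgroup n : Set Circle) :=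
  isClosed_singleton.preimage (continuous_pow (n : ℕ))

lemma AddSubgroup.zmultiples_eq_zmultiples_div_natAbs {K : Type*} [Field K] [CharZero K]
    {a b : K} {k : ℤ} (hk : k ≠ 0) (h : k • a = b) :
    zmultiples a = zmultiples (b / k.natAbs) := by
  subst h
  obtain ⟨n, rfl | rfl⟩ := Int.eq_nat_or_neg k
  · have hn : (n : K) ≠ 0 := by exact_mod_cast hk
    simp [hn]
  · have hn : (n : K) ≠ 0 := by simpa using hk
    simp [neg_div, mul_div_cancel_left₀ _ hn]

lemma AddSubgroup.eq_top_of_isClosed_of_dense {G : Type*} [AddGroup G] [TopologicalSpace G]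
    {S : AddSubgroup G} (hc : IsClosed (S : Set G)) (hd : Dense (S : Set G)) : S = ⊤ := by
  rw [← coe_eq_univ, ← hd.closure_eq, hc.closure_eq]

noncomputable def angleSubgroup (H : Subgroup Circle) : AddSubgroup ℝ :=
  H.toAddSubgroup.comap Circle.expHom

lemma mem_angleSubgroup {H : Subgroup Circle} {x : ℝ} :
    x ∈ angleSubgroup H ↔ Circle.exp x ∈ H :=
  Iff.rfl

lemma angleSubgroup_le_angleSubgroup_iff {H K : Subgroup Circle} :
    angleSubgroup H ≤ angleSubgroup K ↔ H ≤ K :=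
  (AddSubgroup.comap_le_comap_of_surjective Circle.exp_surjective).trans
    Subgroup.toAddSubgroup.le_iff_le

lemma angleSubgroup_injective : Function.Injective angleSubgroup := fun _ _ h =>
  le_antisymm (angleSubgroup_le_angleSubgroup_iff.1 h.le)
    (angleSubgroup_le_angleSubgroup_iff.1 h.ge)

lemma angleSubgroup_top : angleSubgroup ⊤ = ⊤ :=
  AddSubgroup.comap_top _

lemma two_pi_mem_angleSubgroup (H : Subgroup Circle) : 2 * π ∈ angleSubgroup H := by
  rw [mem_angleSubgroup, Circle.exp_two_pi]
  exact H.one_mem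

lemma isClosed_angleSubgroup {H : Subgroup Circle} (hH : IsClosed (H : Set Circle)) :
    IsClosed (angleSubgroup H : Set ℝ) :=
  hH.preimage Circle.exp.continuous

lemma angleSubgroup_rootsOfUnitySubgroup (n : ℕ+) :
    angleSubgroup (rootsOfUnitySubgroup n) = AddSubgroup.zmultiples (2 * π / n) := by
  have hn : ((n : ℕ) : ℝ) ≠ 0 := Nat.cast_ne_zero.2 n.ne_zero
  ext x
  change Circle.exp x ^ (n : ℕ) = 1 ↔ _
  rw [← Circle.exp_natCast_mul, Circle.exp_eq_one, AddSubgroup.mem_zmultiples_iff]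
  refine exists_congr fun j => ?_
  rw [zsmul_eq_mul, mul_div_assoc', div_eq_iff hn, mul_comm x, eq_comm]

lemma rootsOfUnitySubgroup_le_iff {m n : ℕ+} :
    rootsOfUnitySubgroup m ≤ rootsOfUnitySubgroup n ↔ m ∣ n := by
  have hm : ((m : ℕ) : ℝ) ≠ 0 := Nat.cast_ne_zero.2 m.ne_zero
  have hn : ((n : ℕ) : ℝ) ≠ 0 := Nat.cast_ne_zero.2 n.ne_zero
  rw [← angleSubgroup_le_angleSubgroup_iff, angleSubgroup_rootsOfUnitySubgroup,
    angleSubgroup_rootsOfUnitySubgroup, AddSubgroup.zmultiples_le,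
    AddSubgroup.mem_zmultiples_iff, PNat.dvd_iff, ← Int.natCast_dvd_natCast]
  refine exists_congr fun j => ?_
  rw [zsmul_eq_mul, ← @Int.cast_inj ℝ]
  push_cast
  constructor <;> intro h
  · field_simp at h
    linarith
  · field_simp
    linarith

lemma rootsOfUnitySubgroup_ne_top (n : ℕ+) : rootsOfUnitySubgroup n ≠ ⊤ := by
  intro h
  have h2n : 2 * n ∣ n := rootsOfUnitySubgroup_le_iff.1 (h ▸ le_top)
  have h2n_le : 2 * n ≤ n := PNat.le_of_dvd h2n
  rw [← PNat.coe_le_coe, PNat.mul_coe, PNat.val_ofNat] at h2n_le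
  linarith [n.pos]

lemma eq_top_or_exists_eq_rootsOfUnitySubgroup {H : Subgroup Circle}
    (hH : IsClosed (H : Set Circle)) : H = ⊤ ∨ ∃ n : ℕ+, H = rootsOfUnitySubgroup n := by
  rcases (angleSubgroup H).dense_or_cyclic with hd | ⟨a, ha⟩
  · left
    apply angleSubgroup_injective
    rw [angleSubgroup_top]
    exact AddSubgroup.eq_top_of_isClosed_of_dense (isClosed_angleSubgroup hH) hd
  · right
    rw [← AddSubgroup.zmultiples_eq_closure] at ha
    obtain ⟨k, hk⟩ := AddSubgroup.mem_zmultiples_iff.1 (ha ▸ two_pi_mem_angleSubgroup H)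
    have hk0 : k ≠ 0 := by
      rintro rfl
      simp at hk
    refine ⟨k.natAbs.toPNat (Int.natAbs_pos.2 hk0), angleSubgroup_injective ?_⟩
    rw [angleSubgroup_rootsOfUnitySubgroup, ha]
    exact AddSubgroup.zmultiples_eq_zmultiples_div_natAbs hk0 hk

noncomputable def toClosedSubgroupCircle : WithTop PNatDiv → ClosedSubgroupCircle
  | ⊤ => ⟨⊤, isClosed_univ⟩
  | (n : PNatDiv) => ⟨rootsOfUnitySubgroup n, rootsOfUnitySubgroup_isClosed n⟩

lemma toClosedSubgroupCircle_le_iff (x y : WithTop PNatDiv) :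
    toClosedSubgroupCircle x ≤ toClosedSubgroupCircle y ↔ x ≤ y := by
  match x, y with
  | _, ⊤ => exact iff_of_true (Subtype.mk_le_mk.2 le_top) le_top
  | ⊤, (n : PNatDiv) =>
    exact iff_of_false (fun h => rootsOfUnitySubgroup_ne_top n (top_le_iff.1 h))
      (WithTop.not_top_le_coe n)
  | (m : PNatDiv), (n : PNatDiv) =>
    exact rootsOfUnitySubgroup_le_iff.trans (WithTop.coe_le_coe (α := PNatDiv)).symm

lemma toClosedSubgroupCircle_surjective : Function.Surjective toClosedSubgroupCircle := by
  rintro ⟨H, hH⟩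
  rcases eq_top_or_exists_eq_rootsOfUnitySubgroup hH with rfl | ⟨n, rfl⟩
  · exact ⟨⊤, rfl⟩
  · exact ⟨WithTop.some (n : PNatDiv), rfl⟩

/-- The assignment `n ↦ μ_n`, `⊤ ↦ Circle`, defines an order isomorphism from
`WithTop ℕ+` (with `ℕ+` ordered by divisibility and `⊤` a top element) onto the poset
of closed subgroups of the circle group ordered by inclusion.  In particular every
proper closed subgroup of `Circle` is `μ_n` for a unique `n ≥ 1`, and `μ_m ≤ μ_n` iff
`m ∣ n`. -/
theorem closedSubgroups_circle_orderIso :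
    ∃ e : WithTop PNatDiv ≃o ClosedSubgroupCircle,
      (∀ n : ℕ+, (e (WithTop.some (n : PNatDiv))).1 = rootsOfUnitySubgroup n) ∧
      (e ⊤).1 = ⊤ :=
  ⟨OrderIso.ofSurjective (OrderEmbedding.ofMapLEIff _ toClosedSubgroupCircle_le_iff)
    toClosedSubgroupCircle_surjective, fun _ => rfl, rfl⟩
end
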